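/- Let n be a non-negative integer and d = 2^n. There exist functions β_i, γ_i : ℝ^d × ℝ^d × ℝ^{i−1} → ℝ for i = 1, …, d (β_i and γ_i depend only on b, c and the first i−1 coordinates of x) such that for all b, c, x ∈ ℝ^d, the componentwise inequality b ≤ A_n x ≤ c holds if and only if β_i(b, c, (x_1, …, x_{i−1})) ≤ x_i ≤ γ_i(b, c, (x_1, …, x_{i−1})) for every i = 1, …, d. -/

import Mathlib

/-!
The set `{x | b ≤ A_n x ≤ c}` is the preimage of a box under `A_n`, and `A_n` is invertible
(block elimination gives `det A_{n+1} = det (-2 D_n) · (det A_n)²`, and no `ξ_{n+1,k}` vanishes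
since its angle is an odd multiple of `π / 2^{n+2}`). So the set is compact and convex, and
then the fibre of the `i`-th coordinate over fixed `x_1, …, x_{i-1}` is a closed interval
`[β_i, γ_i]` (possibly empty). Over the last coordinate this fibre condition alone already
forces `x` into the set.
-/

/-- σ(n,k) from the paper: σ(0,1)=1 and, with d = 2^n, σ(n+1,k)=σ(n,k) for 1 ≤ k ≤ d,
σ(n+1,k)=2d+1−σ(n,k−d) for d+1 ≤ k ≤ 2d. -/
def sigmaCF : ℕ → ℕ → ℤ
  | 0, _ => 1
  | n + 1, k => if k ≤ 2 ^ n then sigmaCF n k else 2 * 2 ^ n + 1 - sigmaCF n (k - 2 ^ n)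

/-- ξ_{n,k} = 2 cos(π(2σ(n,k) − 1)/2^{n+1}). -/
noncomputable def xiCF (n k : ℕ) : ℝ :=
  2 * Real.cos (Real.pi * (2 * (sigmaCF n k : ℝ) - 1) / 2 ^ (n + 1))

/-- D_n = diag(ξ_{n+1,1}, …, ξ_{n+1,2^n}). -/
noncomputable def DCF (n : ℕ) : Matrix (Fin (2 ^ n)) (Fin (2 ^ n)) ℝ :=
  Matrix.diagonal fun i => xiCF (n + 1) (i.val + 1)

/-- A_0 = (1), A_{n+1} = [[A_n, D_n A_n], [A_n, −D_n A_n]]. -/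
noncomputable def ACF : (n : ℕ) → Matrix (Fin (2 ^ n)) (Fin (2 ^ n)) ℝ
  | 0 => 1
  | n + 1 =>
    Matrix.reindex (finSumFinEquiv.trans (finCongr (by rw [pow_succ, mul_two])))
      (finSumFinEquiv.trans (finCongr (by rw [pow_succ, mul_two])))
      (Matrix.fromBlocks (ACF n) (DCF n * ACF n) (ACF n) (-(DCF n * ACF n)))

open Set

theorem Real.exists_eq_Icc_of_isCompact_of_convex {s : Set ℝ} (hs : IsCompact s)
    (hc : Convex ℝ s) : ∃ a b, s = Icc a b := by
  rcases s.eq_empty_or_nonempty with rfl | hne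
  · exact ⟨1, 0, (Icc_eq_empty (by norm_num)).symm⟩
  · exact ⟨_, _, eq_Icc_of_connected_compact ⟨hne, hc.isPreconnected⟩ hs⟩

theorem exists_sequential_bounds_of_isCompact_of_convex {d : ℕ} (hd : 0 < d)
    {S : Set (Fin d → ℝ)} (hS : IsCompact S) (hc : Convex ℝ S) :
    ∃ β γ : (i : Fin d) → (Fin (i : ℕ) → ℝ) → ℝ, ∀ x : Fin d → ℝ,
      x ∈ S ↔ ∀ i : Fin d,
        β i (fun j => x ⟨(j : ℕ), j.isLt.trans i.isLt⟩) ≤ x i ∧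
        x i ≤ γ i (fun j => x ⟨(j : ℕ), j.isLt.trans i.isLt⟩) := by
  let init (i : Fin d) : (Fin d → ℝ) →ₗ[ℝ] Fin (i : ℕ) → ℝ :=
    LinearMap.funLeft ℝ ℝ (Fin.castLE i.isLt.le)
  have h_fiber (i : Fin d) (p : Fin (i : ℕ) → ℝ) :
      ∃ a b, (· i) '' (S ∩ init i ⁻¹' {p}) = Icc a b := by
    refine Real.exists_eq_Icc_of_isCompact_of_convex ?_ ?_
    · have h_closed :=
        (isClosed_singleton (x := p)).preimage (init i).continuous_of_finiteDimensional
      exact (hS.inter_right h_closed).image (continuous_apply i)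
    · have h_convex := (convex_singleton p).linear_preimage (init i)
      exact (hc.inter h_convex).linear_image (LinearMap.proj i)
  choose β γ hβγ using h_fiber
  refine ⟨β, γ, fun x => ⟨fun hx i => ?_, fun hx => ?_⟩⟩
  · rw [← mem_Icc, ← hβγ]
    exact ⟨x, ⟨hx, rfl⟩, rfl⟩
  · let last : Fin d := ⟨d - 1, by omega⟩
    obtain ⟨z, ⟨hzS, hz_init⟩, hz_last⟩ :
        x last ∈ (· last) '' (S ∩ init last ⁻¹' {init last x}) := by
      rw [hβγ]; exact hx last
    convert hzS using 1
    funext j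
    rcases (Nat.le_sub_one_of_lt j.isLt).lt_or_eq with hj | hj
    · exact (congrFun hz_init ⟨j, hj⟩).symm
    · rw [show j = last from Fin.ext hj]; exact hz_last.symm

namespace Matrix

variable {ι : Type*} [Fintype ι]

theorem convex_setOf_le_mulVec_le (M : Matrix ι ι ℝ) (b c : ι → ℝ) :
    Convex ℝ {x | b ≤ M *ᵥ x ∧ M *ᵥ x ≤ c} :=
  (convex_Icc b c).linear_preimage M.mulVecLin

theorem isCompact_setOf_le_mulVec_le [DecidableEq ι] {M : Matrix ι ι ℝ} (hM : IsUnit M.det)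
    (b c : ι → ℝ) : IsCompact {x | b ≤ M *ᵥ x ∧ M *ᵥ x ≤ c} := by
  have h_eq : (M⁻¹ *ᵥ ·) '' Icc b c = (M *ᵥ ·) ⁻¹' Icc b c :=
    congrFun (image_eq_preimage_of_inverse (f := (M⁻¹ *ᵥ ·)) (g := (M *ᵥ ·))
      (fun y => by simp [mulVec_mulVec, mul_nonsing_inv M hM])
      (fun x => by simp [mulVec_mulVec, nonsing_inv_mul M hM])) _
  have h_cpt :=
    (isCompact_Icc (a := b) (b := c)).image M⁻¹.mulVecLin.continuous_of_finiteDimensional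
  rwa [coe_mulVecLin, h_eq] at h_cpt

theorem exists_sequential_bounds_of_isUnit_det {d : ℕ} (hd : 0 < d)
    {M : Matrix (Fin d) (Fin d) ℝ} (hM : IsUnit M.det) :
    ∃ β γ : (Fin d → ℝ) → (Fin d → ℝ) → (i : Fin d) → (Fin (i : ℕ) → ℝ) → ℝ,
      ∀ b c x : Fin d → ℝ,
        (b ≤ M *ᵥ x ∧ M *ᵥ x ≤ c) ↔
          ∀ i : Fin d,
            β b c i (fun j => x ⟨(j : ℕ), j.isLt.trans i.isLt⟩) ≤ x i ∧
            x i ≤ γ b c i (fun j => x ⟨(j : ℕ), j.isLt.trans i.isLt⟩) := by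
  choose β γ h using fun b c => exists_sequential_bounds_of_isCompact_of_convex hd
    (isCompact_setOf_le_mulVec_le hM b c) (convex_setOf_le_mulVec_le M b c)
  exact ⟨β, γ, fun b c => h b c⟩

end Matrix

open Real

theorem Real.cos_pi_mul_odd_div_two_pow_ne_zero {m : ℤ} (hm : Odd m) (k : ℕ) :
    cos (π * m / 2 ^ (k + 2)) ≠ 0 := by
  rw [Ne, cos_eq_zero_iff]
  rintro ⟨l, hl⟩
  have h_real : (m : ℝ) = (2 * l + 1) * 2 ^ (k + 1) := by
    field_simp at hl
    linear_combination hl / 2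
  have h_int : m = (2 * l + 1) * 2 ^ (k + 1) := by exact_mod_cast h_real
  rw [h_int, pow_succ] at hm
  exact Int.not_even_iff_odd.mpr hm ⟨(2 * l + 1) * 2 ^ k, by ring⟩

theorem xiCF_succ_ne_zero (n k : ℕ) : xiCF (n + 1) k ≠ 0 := by
  have h_cos := cos_pi_mul_odd_div_two_pow_ne_zero
    (m := 2 * sigmaCF (n + 1) k - 1) ⟨sigmaCF (n + 1) k - 1, by ring⟩ n
  push_cast at h_cos
  exact mul_ne_zero two_ne_zero h_cos

theorem isUnit_det_ACF (n : ℕ) : IsUnit (ACF n).det := by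
  induction n with
  | zero => simp [ACF]
  | succ n ih =>
    have h_factor : Matrix.fromBlocks (ACF n) (DCF n * ACF n) (ACF n) (-(DCF n * ACF n)) =
        Matrix.fromBlocks 1 (DCF n) 1 (-DCF n) * Matrix.fromBlocks (ACF n) 0 0 (ACF n) := by
      simp [Matrix.fromBlocks_multiply]
    have h_schur : -DCF n - 1 * DCF n = (-2 : ℝ) • DCF n := by
      rw [one_mul]; module
    rw [ACF, Matrix.det_reindex_self, h_factor, Matrix.det_mul, Matrix.det_fromBlocks_one₁₁,
      Matrix.det_fromBlocks_zero₂₁, h_schur, Matrix.det_smul, DCF, Matrix.det_diagonal]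
    refine IsUnit.mul (IsUnit.mul ?_ ?_) (ih.mul ih)
    · exact (isUnit_iff_ne_zero.mpr (by norm_num)).pow _
    · exact isUnit_iff_ne_zero.mpr
        (Finset.prod_ne_zero_iff.mpr fun _ _ => xiCF_succ_ne_zero n _)

/-- There exist functions `β_i, γ_i` of `b`, `c` and the first `i−1` coordinates of `x`
such that `b ≤ A_n x ≤ c` (componentwise) holds iff
`β_i(b, c, (x_1, …, x_{i−1})) ≤ x_i ≤ γ_i(b, c, (x_1, …, x_{i−1}))` for every `i`. -/
theorem exists_sequential_bounds (n : ℕ) :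
    ∃ β γ : (Fin (2 ^ n) → ℝ) → (Fin (2 ^ n) → ℝ) →
        (i : Fin (2 ^ n)) → (Fin (i : ℕ) → ℝ) → ℝ,
      ∀ b c x : Fin (2 ^ n) → ℝ,
        (b ≤ (ACF n).mulVec x ∧ (ACF n).mulVec x ≤ c) ↔
          ∀ i : Fin (2 ^ n),
            β b c i (fun j => x ⟨(j : ℕ), j.isLt.trans i.isLt⟩) ≤ x i ∧
            x i ≤ γ b c i (fun j => x ⟨(j : ℕ), j.isLt.trans i.isLt⟩) :=
  Matrix.exists_sequential_bounds_of_isUnit_det (by positivity) (isUnit_det_ACF n)
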